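/- arXiv:1011.6335 — 2 statements merged into one kernel-verified Lean document; each statement's English description precedes it below -/
import Mathlib

section
/- Let k ⊆ K be an extension of fields of characteristic 0. Let f ∈ K[[t]] be a formal power series with zero constant term, and suppose there exists a nonzero polynomial P ∈ k[t,x] in two variables with coefficients in k such that P(t, f(t)) = 0 in K[[t]]. Then every coefficient of f is algebraic over k. -/
/-!
If some coefficient `a` of `f` were transcendental over `k`, then `a` could be moved to
infinitely many distinct values `σ a` by `k`-embeddings `σ` of `K` into an algebraic closure `Ω`:
choose a transcendence basis through `a`, translate `a` by an element of the infinite field `k`,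
and extend. Each `σ` carries `f` to a root `σ f ∈ Ω⟦t⟧` of the one-variable polynomial
`P(t, x)`, which is nonzero because `t` is transcendental over `k`. A nonzero polynomial over
the domain `Ω⟦t⟧` has finitely many roots, so the `n`-th coefficients `σ a` of these roots take
only finitely many values.
-/

open MvPolynomial

theorem MvPolynomial.aeval_X_add_C_injective {R σ : Type*} [CommRing R] (v : σ → R) :
    Function.Injective
      (aeval fun i => X i + C (v i) : MvPolynomial σ R →ₐ[R] MvPolynomial σ R) := by
  have h : (aeval fun i => X i - C (v i)).comp (aeval fun i => X i + C (v i)) =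
      AlgHom.id R (MvPolynomial σ R) := by
    ext i; simp
  refine Function.LeftInverse.injective (g := aeval fun i => X i - C (v i)) fun p => ?_
  rw [← AlgHom.comp_apply, h, AlgHom.id_apply]

theorem AlgebraicIndependent.add_algebraMap {ι R A : Type*} [CommRing R] [CommRing A]
    [Algebra R A] {x : ι → A} (hx : AlgebraicIndependent R x) (v : ι → R) :
    AlgebraicIndependent R fun i => x i + algebraMap R A (v i) := by
  have h : aeval (fun i => x i + algebraMap R A (v i)) =
      (aeval x).comp (aeval fun i => X i + C (v i)) := by
    ext i; simp
  rw [algebraicIndependent_iff_injective_aeval, h, AlgHom.coe_comp]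
  exact (algebraicIndependent_iff_injective_aeval.mp hx).comp (aeval_X_add_C_injective v)

theorem IsTranscendenceBasis.exists_algHom_comp_eq {ι k K Ω : Type*} [Field k] [Field K]
    [Field Ω] [Algebra k K] [Algebra k Ω] [IsAlgClosed Ω] {x : ι → K}
    (hx : IsTranscendenceBasis k x) {y : ι → Ω} (hy : AlgebraicIndependent k y) :
    ∃ σ : K →ₐ[k] Ω, σ ∘ x = y := by
  let A := Algebra.adjoin k (Set.range x)
  have : Algebra.IsAlgebraic A K := hx.isAlgebraic
  let φ : A →ₐ[k] Ω := (aeval y).comp hx.1.aevalEquiv.symm.toAlgHom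
  have hφ : Function.Injective φ :=
    (algebraicIndependent_iff_injective_aeval.mp hy).comp hx.1.aevalEquiv.symm.injective
  let : Algebra A Ω := φ.toAlgebra
  have : IsScalarTower k A Ω := .of_algebraMap_eq fun c => (φ.commutes c).symm
  have : Module.IsTorsionFree A Ω := Module.isTorsionFree_iff_algebraMap_injective.mpr hφ
  refine ⟨(IsAlgClosed.lift : K →ₐ[A] Ω).restrictScalars k, funext fun i => ?_⟩
  have hxi : x i = algebraMap A K (hx.1.aevalEquiv (X i)) := by simp
  rw [Function.comp_apply, AlgHom.restrictScalars_apply, hxi, AlgHom.commutes]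
  change φ _ = _
  simp [φ]

theorem AlgHom.exists_apply_eq_add_of_transcendental {k K Ω : Type*} [Field k] [Field K]
    [Field Ω] [Algebra k K] [Algebra k Ω] [IsAlgClosed Ω] (σ₀ : K →ₐ[k] Ω) {a : K}
    (ha : Transcendental k a) (c : k) : ∃ σ : K →ₐ[k] Ω, σ a = σ₀ a + algebraMap k Ω c := by
  classical
  obtain ⟨s, has, hs⟩ := exists_isTranscendenceBasis_superset (R := k) (s := {a})
    (by simpa [AlgebraicIndepOn] using ha)
  let i : s := ⟨a, has rfl⟩
  obtain ⟨σ, hσ⟩ := hs.exists_algHom_comp_eq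
    ((AlgebraicIndependent.add_algebraMap hs.1 (Pi.single i c)).map' σ₀.injective)
  exact ⟨σ, by simpa [i] using congrFun hσ i⟩

theorem Transcendental.infinite_range_algHom_apply {k K Ω : Type*} [Field k] [Infinite k]
    [Field K] [Field Ω] [Algebra k K] [Algebra k Ω] [IsAlgClosed Ω] (σ₀ : K →ₐ[k] Ω) {a : K}
    (ha : Transcendental k a) : (Set.range fun σ : K →ₐ[k] Ω => σ a).Infinite := by
  have hsub : (Set.range fun c : k => σ₀ a + algebraMap k Ω c) ⊆
      Set.range fun σ : K →ₐ[k] Ω => σ a := by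
    rintro _ ⟨c, rfl⟩
    obtain ⟨σ, hσ⟩ := σ₀.exists_apply_eq_add_of_transcendental ha c
    exact ⟨σ, hσ⟩
  refine (Set.infinite_range_of_injective fun c d h => ?_).mono hsub
  exact (algebraMap k Ω).injective (add_left_cancel h)

theorem PowerSeries.transcendental_X (k Ω : Type*) [Field k] [CommRing Ω] [Nontrivial Ω]
    [Algebra k Ω] : Transcendental k (PowerSeries.X : PowerSeries Ω) := by
  have hinj : Function.Injective (Polynomial.coeToPowerSeries.algHom Ω : Polynomial k →ₐ[k] _) :=
    (PowerSeries.map_injective _ (algebraMap k Ω).injective).comp (Polynomial.coe_injective k)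
  simpa [Transcendental] using
    (isAlgebraic_algHom_iff _ hinj).not.mpr (Polynomial.transcendental_X k)

theorem PowerSeries.aeval_X_map {k K L : Type*} [CommRing k] [CommRing K] [CommRing L]
    [Algebra k K] [Algebra k L] (σ : K →ₐ[k] L) (f : PowerSeries K)
    (P : MvPolynomial (Fin 2) k) :
    MvPolynomial.aeval ![X, map σ f] P = mapAlgHom σ (MvPolynomial.aeval ![X, f] P) := by
  rw [comp_aeval_apply]
  congr 1
  ext i : 1
  fin_cases i <;> simp [mapAlgHom_apply]

theorem MvPolynomial.finite_setOf_aeval_eq_zero {k R : Type*} [CommRing k] [CommRing R]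
    [IsDomain R] [Algebra k R] {P : MvPolynomial (Fin 2) k} (hP : P ≠ 0) {t : R}
    (ht : Transcendental k t) : {x : R | aeval ![t, x] P = 0}.Finite := by
  let evalT : MvPolynomial (Fin 1) k →ₐ[k] R := aeval fun _ => t
  let toPoly : MvPolynomial (Fin 2) k →ₐ[k] Polynomial R :=
    (Polynomial.mapAlgHom evalT).comp ((finSuccEquiv k 1).toAlgHom.comp (rename (Equiv.swap 0 1)))
  have hinj : Function.Injective toPoly :=
    (Polynomial.map_injective _ (algebraicIndependent_unique_type_iff.mpr ht)).comp
      ((finSuccEquiv k 1).injective.comp (rename_injective _ (Equiv.swap 0 1).injective))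
  have heval (x : R) : (toPoly P).eval x = aeval ![t, x] P := by
    have : ((Polynomial.aeval x).restrictScalars k).comp toPoly = aeval ![t, x] := by
      ext i
      fin_cases i
      · simp [toPoly, evalT, show (X 1 : MvPolynomial (Fin 2) k) = X (Fin.succ 0) from rfl,
          finSuccEquiv_X_succ]
      · simp [toPoly, finSuccEquiv_X_zero]
    exact AlgHom.congr_fun this P
  simpa [heval] using Polynomial.finite_setOfPred_isRoot ((map_ne_zero_iff toPoly hinj).mpr hP)

theorem coeffs_algebraic_of_poly_relation_general
    (k K : Type*) [Field k] [Field K] [Algebra k K] [CharZero k]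
    (f : PowerSeries K)
    (P : MvPolynomial (Fin 2) k) (hP : P ≠ 0)
    (hPf : MvPolynomial.aeval ![(PowerSeries.X : PowerSeries K), f] P = 0) :
    ∀ n : ℕ, IsAlgebraic k (PowerSeries.coeff n f) := by
  intro n
  by_contra ha
  let Ω := AlgebraicClosure K
  have hroots := finite_setOf_aeval_eq_zero hP (PowerSeries.transcendental_X k Ω)
  have hsub : (Set.range fun σ : K →ₐ[k] Ω => σ (PowerSeries.coeff n f)) ⊆
      PowerSeries.coeff n '' {g | aeval ![PowerSeries.X, g] P = 0} := by
    rintro _ ⟨σ, rfl⟩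
    refine ⟨PowerSeries.map σ f, ?_, PowerSeries.coeff_map _ _ _⟩
    rw [Set.mem_ofPred_eq, PowerSeries.aeval_X_map, hPf, map_zero]
  exact (Transcendental.infinite_range_algHom_apply (IsScalarTower.toAlgHom k K Ω) ha).mono hsub
    (hroots.image _)

/-- If `k ⊆ K` is an extension of fields of characteristic `0`, `f ∈ K[[t]]` has zero
constant term, and there is a nonzero polynomial `P ∈ k[t,x]` with `P(t, f(t)) = 0` in
`K[[t]]`, then every coefficient of `f` is algebraic over `k`. -/
theorem coeffs_algebraic_of_poly_relation
    (k K : Type*) [Field k] [Field K] [Algebra k K] [CharZero k] [CharZero K]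
    (f : PowerSeries K) (hf : PowerSeries.constantCoeff f = 0)
    (P : MvPolynomial (Fin 2) k) (hP : P ≠ 0)
    (hPf : MvPolynomial.aeval ![(PowerSeries.X : PowerSeries K), f] P = 0) :
    ∀ n : ℕ, IsAlgebraic k (PowerSeries.coeff n f) :=
  coeffs_algebraic_of_poly_relation_general k K f P hP hPf
end

section
/- Let G be a finite connected simple graph and let M be a natural number. Then there exist a finite connected simple graph H and a surjective graph homomorphism f : H → G which is a covering map of graphs — that is, for every vertex v of H, f restricts to a bijection from the set of neighbours of v in H onto the set of neighbours of f(v) in G — such that every cycle of H has length at least M (equivalently, the girth of H is at least M). -/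
/-!
For every word `x ∈ V^(M+1)` and every edge `e` of `G`, let `e` act on the positions
`{0, …, M}` of `x` by swapping `j` and `j + 1` whenever `x` traverses `e` between them; this
is an involution as long as `x` does not immediately backtrack along `e`. Taking these
permutations over all words at once gives a voltage assignment of `G` in a finite group, and
the projection of its derived graph is a covering map. A cycle of the derived graph projects to
a non-backtracking closed walk `p` of trivial voltage. But if `p.length ≤ M`, the voltage of `p`
at the coordinate `x = p` carries position `p.length` to `0`. A connected component of the
derived graph is therefore the required cover.
-/

open Function

namespace SimpleGraph

variable {V W : Type*} {G : SimpleGraph V} {H : SimpleGraph W}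

def Hom.IsCovering (f : H →g G) : Prop :=
  ∀ w, Set.BijOn f (H.neighborSet w) (G.neighborSet (f w))

theorem Hom.IsCovering.exists_reachable_of_walk {f : H →g G} (hf : f.IsCovering) {a v : V}
    (p : G.Walk a v) (w : W) (hw : f w = a) : ∃ w', H.Reachable w w' ∧ f w' = v := by
  induction p generalizing w with
  | nil => exact ⟨w, .rfl, hw⟩
  | cons hab _ ih =>
    obtain ⟨w₁, hw₁, rfl⟩ := (hf w).surjOn (show _ ∈ G.neighborSet (f w) from hw ▸ hab)
    obtain ⟨w', hw', rfl⟩ := ih w₁ rfl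
    exact ⟨w', (Adj.reachable hw₁).trans hw', rfl⟩

theorem Hom.IsCovering.surjective {f : H →g G} (hf : f.IsCovering) (hG : G.Preconnected)
    [Nonempty W] : Surjective f := fun v ↦
  let w := Classical.arbitrary W
  (hf.exists_reachable_of_walk (hG (f w) v).some w rfl).imp fun _ ↦ And.right

theorem Hom.IsCovering.comp_toSimpleGraph_hom {f : H →g G} (hf : f.IsCovering)
    (C : H.ConnectedComponent) : (f.comp C.toSimpleGraph_hom).IsCovering := by
  rintro ⟨w, hw⟩
  refine ⟨fun _ h ↦ (f.comp C.toSimpleGraph_hom).map_adj h,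
    fun _ h₁ _ h₂ h ↦ Subtype.val_injective ((hf w).injOn h₁ h₂ h), fun v hv ↦ ?_⟩
  obtain ⟨w', hw', rfl⟩ := (hf w).surjOn hv
  exact ⟨⟨w', C.mem_supp_of_adj_mem_supp hw hw'⟩, hw', rfl⟩

def Walk.IsNonBacktracking {u v : V} (p : G.Walk u v) : Prop :=
  ∀ i, i + 2 ≤ p.length → p.getVert (i + 2) ≠ p.getVert i

theorem Walk.IsTrail.isNonBacktracking {u v : V} {p : G.Walk u v} (hp : p.IsTrail) :
    p.IsNonBacktracking := by
  intro i hi heq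
  have hedge : p.edges[i + 1]'(by simp; omega) = p.edges[i]'(by simp; omega) := by
    rw [getElem_edges, getElem_edges, heq, Sym2.eq_swap]
  simpa using (hp.edges_nodup.getElem_inj_iff).mp hedge

theorem Walk.IsNonBacktracking.map {f : H →g G} (hf : ∀ w, Set.InjOn f (H.neighborSet w))
    {u v : W} {p : H.Walk u v} (hp : p.IsNonBacktracking) : (p.map f).IsNonBacktracking := by
  intro i hi heq
  rw [length_map] at hi
  rw [getVert_map, getVert_map] at heq
  exact hp i hi <| hf (p.getVert (i + 1)) (p.adj_getVert_succ (by omega))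
    (p.adj_getVert_succ (by omega)).symm heq

section Voltage

variable {A : Type*} [Group A]

def voltageAlong (σ : V → V → A) (u : ℕ → V) (n : ℕ) : A :=
  ((List.range n).map fun i ↦ σ (u i) (u (i + 1))).prod

@[simp]
theorem voltageAlong_zero (σ : V → V → A) (u : ℕ → V) : voltageAlong σ u 0 = 1 := rfl

theorem voltageAlong_succ (σ : V → V → A) (u : ℕ → V) (n : ℕ) :
    voltageAlong σ u (n + 1) = voltageAlong σ u n * σ (u n) (u (n + 1)) :=
  List.prod_range_succ _ n

variable (G) (σ : V → V → A) (hσ : ∀ u v, σ v u = (σ u v)⁻¹)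

def derivedGraph : SimpleGraph (V × A) where
  Adj p q := G.Adj p.1 q.1 ∧ q.2 = p.2 * σ p.1 q.1
  symm := ⟨fun p q h ↦ ⟨h.1.symm, by rw [h.2, hσ p.1 q.1, mul_inv_cancel_right]⟩⟩
  loopless := ⟨fun p h ↦ G.loopless.irrefl p.1 h.1⟩

def derivedGraph.fst : G.derivedGraph σ hσ →g G where
  toFun := Prod.fst
  map_rel' h := h.1

variable {G σ hσ}

theorem isCovering_derivedGraph_fst : (derivedGraph.fst G σ hσ).IsCovering := by
  rintro ⟨v, x⟩
  refine ⟨fun _ h ↦ h.1, ?_, fun u hu ↦ ⟨(u, x * σ v u), ⟨hu, rfl⟩, rfl⟩⟩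
  rintro ⟨u₁, y₁⟩ ⟨-, h₁⟩ ⟨u₂, y₂⟩ ⟨-, h₂⟩ (rfl : u₁ = u₂)
  exact Prod.ext rfl (h₁.trans h₂.symm)

theorem derivedGraph_snd_getVert {p q : V × A} (c : (G.derivedGraph σ hσ).Walk p q) {j : ℕ}
    (hj : j ≤ c.length) :
    (c.getVert j).2 = p.2 * voltageAlong σ (fun i ↦ (c.getVert i).1) j := by
  induction j with
  | zero => simp
  | succ j ih =>
    rw [voltageAlong_succ, ← mul_assoc, ← ih (by omega)]
    exact (c.adj_getVert_succ (by omega)).2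

theorem le_egirth_derivedGraph (M : ℕ)
    (h : ∀ (u : V) (p : G.Walk u u), p.IsNonBacktracking → 0 < p.length → p.length < M →
      voltageAlong σ p.getVert p.length ≠ 1) :
    (M : ℕ∞) ≤ (G.derivedGraph σ hσ).egirth := by
  refine le_egirth.mpr fun a c hc ↦ ?_
  by_contra! hlt
  let p := c.map (derivedGraph.fst G σ hσ)
  have hnb : p.IsNonBacktracking := hc.isTrail.isNonBacktracking.map fun w ↦
    (isCovering_derivedGraph_fst (σ := σ) (hσ := hσ) w).injOn
  have hvert : p.getVert = fun i ↦ (c.getVert i).1 := funext fun i ↦ Walk.getVert_map _ _ i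
  have hlen : p.length = c.length := Walk.length_map _ _
  refine h _ p hnb (by have := hc.three_le_length; omega) (by exact_mod_cast hlen ▸ hlt) ?_
  have := derivedGraph_snd_getVert c le_rfl
  rw [Walk.getVert_length] at this
  rw [hvert, hlen]
  exact left_eq_mul.mp this

end Voltage

section WordVoltage

variable {n : ℕ}

def Traverses (x : Fin (n + 1) → V) (e : Sym2 V) (j : ℕ) : Prop :=
  ∃ h : j < n, s(x ⟨j, by omega⟩, x ⟨j + 1, by omega⟩) = e

open scoped Classical in
noncomputable def stepAlong (x : Fin (n + 1) → V) (e : Sym2 V) (j : Fin (n + 1)) :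
    Fin (n + 1) :=
  if 0 < j.val ∧ Traverses x e (j - 1) then ⟨j - 1, by omega⟩
  else if h : Traverses x e j then ⟨j + 1, by have := h.1; omega⟩ else j

theorem stepAlong_succ {x : Fin (n + 1) → V} {e : Sym2 V} {j : ℕ} (hj : Traverses x e j) :
    stepAlong x e ⟨j + 1, by have := hj.1; omega⟩ = ⟨j, by have := hj.1; omega⟩ := by
  simp [stepAlong, hj]

theorem stepAlong_of_traverses {x : Fin (n + 1) → V} {e : Sym2 V}
    (h : ∀ j, Traverses x e j → ¬ Traverses x e (j + 1)) {j : ℕ} (hj : Traverses x e j) :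
    stepAlong x e ⟨j, by have := hj.1; omega⟩ = ⟨j + 1, by have := hj.1; omega⟩ := by
  have hpred : ¬ (0 < j ∧ Traverses x e (j - 1)) := fun ⟨hj0, hj'⟩ ↦
    h (j - 1) hj' (by rwa [Nat.sub_add_cancel hj0])
  simp [stepAlong, hpred, hj]

theorem stepAlong_involutive {x : Fin (n + 1) → V} {e : Sym2 V}
    (h : ∀ j, Traverses x e j → ¬ Traverses x e (j + 1)) :
    Involutive (stepAlong x e) := by
  rintro ⟨j, hjn⟩
  by_cases hback : 0 < j ∧ Traverses x e (j - 1)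
  · obtain ⟨k, rfl⟩ : ∃ k, j = k + 1 := ⟨j - 1, by omega⟩
    have hk : Traverses x e k := hback.2
    rw [stepAlong_succ hk, stepAlong_of_traverses h hk]
  by_cases hfwd : Traverses x e j
  · rw [stepAlong_of_traverses h hfwd, stepAlong_succ hfwd]
  · simp [stepAlong, hback, hfwd]

open scoped Classical in
/-- If `x` traverses `e` twice in a row, `stepAlong x e` need not be a permutation; the junk
value `1` keeps `traversalPerm x e` an involution in every case. -/
noncomputable def traversalPerm (x : Fin (n + 1) → V) (e : Sym2 V) : Equiv.Perm (Fin (n + 1)) :=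
  if h : Involutive (stepAlong x e) then h.toPerm else 1

theorem traversalPerm_mul_self (x : Fin (n + 1) → V) (e : Sym2 V) :
    traversalPerm x e * traversalPerm x e = 1 := by
  unfold traversalPerm
  split_ifs with h
  · exact Equiv.ext h
  · exact mul_one 1

theorem traversalPerm_apply_succ {x : Fin (n + 1) → V} {e : Sym2 V}
    (hinv : Involutive (stepAlong x e)) {j : ℕ} (hj : Traverses x e j) :
    traversalPerm x e ⟨j + 1, by have := hj.1; omega⟩ = ⟨j, by have := hj.1; omega⟩ := by
  rw [traversalPerm, dif_pos hinv]
  exact stepAlong_succ hj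

variable (n) in
noncomputable def wordVoltage (u v : V) : (Fin (n + 1) → V) → Equiv.Perm (Fin (n + 1)) :=
  fun x ↦ traversalPerm x s(u, v)

theorem wordVoltage_swap (u v : V) : wordVoltage n v u = (wordVoltage n u v)⁻¹ := by
  funext x
  rw [Pi.inv_apply, wordVoltage, wordVoltage, Sym2.eq_swap]
  exact eq_inv_of_mul_eq_one_left (traversalPerm_mul_self x s(u, v))

theorem Walk.IsNonBacktracking.stepAlong_getVert_involutive {a b : V} {p : G.Walk a b}
    (hp : p.IsNonBacktracking) {e : Sym2 V} (he : ¬ e.IsDiag) :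
    Involutive (stepAlong (fun i : Fin (n + 1) ↦ p.getVert i) e) := by
  refine stepAlong_involutive fun j ⟨_, hj⟩ ⟨_, hj₁⟩ ↦ ?_
  dsimp only at hj hj₁
  have hne : p.getVert j ≠ p.getVert (j + 1) := fun h ↦ he (hj ▸ Sym2.mk_isDiag_iff.mpr h)
  rw [← hj₁, Sym2.eq_iff] at hj
  obtain ⟨h, -⟩ | ⟨h, -⟩ := hj
  · exact hne h
  by_cases hlen : j + 2 ≤ p.length
  · exact hp j hlen h.symm
  · rw [h, p.getVert_of_length_le (by omega), p.getVert_of_length_le (by omega)] at hne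
    exact hne rfl

theorem voltageAlong_wordVoltage_apply {a b : V} (p : G.Walk a b) (hp : p.IsNonBacktracking)
    (hn : p.length ≤ n) {j : ℕ} (hj : j ≤ p.length) :
    voltageAlong (wordVoltage n) p.getVert j (fun i ↦ p.getVert i) ⟨j, by omega⟩ = 0 := by
  induction j with
  | zero => rfl
  | succ j ih =>
    have he : ¬ s(p.getVert j, p.getVert (j + 1)).IsDiag :=
      G.not_isDiag_of_mem_edgeSet (p.adj_getVert_succ (by omega))
    have htr : Traverses (fun i : Fin (n + 1) ↦ p.getVert i)
        s(p.getVert j, p.getVert (j + 1)) j := ⟨by omega, rfl⟩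
    rw [voltageAlong_succ, Pi.mul_apply, Equiv.Perm.mul_apply, wordVoltage,
      traversalPerm_apply_succ (hp.stepAlong_getVert_involutive he) htr, ih (by omega)]

theorem voltageAlong_wordVoltage_ne_one {a b : V} (p : G.Walk a b) (hp : p.IsNonBacktracking)
    (h0 : 0 < p.length) (hn : p.length ≤ n) :
    voltageAlong (wordVoltage n) p.getVert p.length ≠ 1 := fun h ↦ by
  have := voltageAlong_wordVoltage_apply p hp hn le_rfl
  rw [h] at this
  exact h0.ne' (congrArg Fin.val this)

end WordVoltage

end SimpleGraph

/-- For every finite connected simple graph `G` and every `M : ℕ` there is a finite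
connected simple graph `H` together with a surjective covering map of graphs
`f : H → G` (a graph homomorphism restricting to a bijection between the neighbour
set of each vertex `v` of `H` and the neighbour set of `f v` in `G`) such that every
cycle of `H` has length at least `M`. -/
theorem exists_finite_cover_with_large_girth
    {V : Type} [Fintype V] (G : SimpleGraph V) (hG : G.Connected) (M : ℕ) :
    ∃ (W : Type) (_ : Fintype W) (H : SimpleGraph W) (f : H →g G),
      H.Connected ∧
      Function.Surjective f ∧
      (∀ w : W, Set.BijOn f (H.neighborSet w) (G.neighborSet (f w))) ∧
      (∀ (w : W) (c : H.Walk w w), c.IsCycle → M ≤ c.length) := by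
  obtain ⟨v₀⟩ := hG.nonempty
  let C := (G.derivedGraph (SimpleGraph.wordVoltage M) SimpleGraph.wordVoltage_swap)
    |>.connectedComponentMk (v₀, 1)
  have hf := SimpleGraph.isCovering_derivedGraph_fst.comp_toSimpleGraph_hom C
  have hgirth : (M : ℕ∞) ≤ C.toSimpleGraph.egirth :=
    (SimpleGraph.le_egirth_derivedGraph M fun _ p hp h0 hM ↦
      SimpleGraph.voltageAlong_wordVoltage_ne_one p hp h0 hM.le).trans
      (SimpleGraph.Embedding.induce _).isContained.egirth_le
  have := C.connected_toSimpleGraph.nonempty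
  refine ⟨C, Fintype.ofFinite _, C.toSimpleGraph, _, C.connected_toSimpleGraph,
    hf.surjective hG.preconnected, hf, fun w c hc ↦ ?_⟩
  exact_mod_cast SimpleGraph.le_egirth.mp hgirth w c hc
end
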